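/- The Thomas division is stable: if u and v are distinct commutative monomials with u | v, then u does not Thomas-involutively divide v when multiplicative variables are taken over the set {u, v}; explicitly, there is a variable x_i with exponent in u strictly less than its exponent in v, this variable is nonmultiplicative for u over {u,v}, and it occurs in v/u. -/
import Mathlib

/-- Commutative monomials over `R[x_1, …, x_n]` are identified with their
multidegrees `Fin n → ℕ`.  For a set `U` of monomials, the Thomas division
declares `x i` multiplicative for `u ∈ U` iff the exponent of `x i` in `u` is
maximal among the elements of `U`. -/
def ThomasMult {n : ℕ} (U : Set (Fin n → ℕ)) (u : Fin n → ℕ) (i : Fin n) : Prop :=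
  ∀ v ∈ U, v i ≤ u i

/-- `u` Thomas-involutively divides `w` over `U`: `u | w` and every variable
occurring in the quotient `w/u` is Thomas-multiplicative for `u` over `U`. -/
def ThomasInvDiv {n : ℕ} (U : Set (Fin n → ℕ)) (u w : Fin n → ℕ) : Prop :=
  (∀ t, u t ≤ w t) ∧ ∀ t, u t < w t → ThomasMult U u t

/-- **The Thomas division is stable.**
If `u` and `v` are distinct monomials with `u | v`, then there is a variable
`x i` whose exponent in `u` is strictly smaller than in `v` (so `x i` occurs in
`v/u`) and which is Thomas-nonmultiplicative for `u` over `{u, v}`; hence `u`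
does not Thomas-involutively divide `v` over `{u, v}`. -/
theorem thomas_stable {n : ℕ} (u v : Fin n → ℕ) (hne : u ≠ v)
    (hdvd : ∀ t, u t ≤ v t) :
    (∃ i, u i < v i ∧ ¬ ThomasMult ({u, v} : Set (Fin n → ℕ)) u i) ∧
    ¬ ThomasInvDiv ({u, v} : Set (Fin n → ℕ)) u v := by
  obtain ⟨i, hi⟩ : ∃ i, u i ≠ v i := by
    by_contra h
    push_neg at h
    exact hne (funext h)
  have hlt : u i < v i := lt_of_le_of_ne (hdvd i) hi
  have hnm : ¬ ThomasMult ({u, v} : Set (Fin n → ℕ)) u i := fun h =>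
    absurd (h v (Or.inr rfl)) (not_le.mpr hlt)
  exact ⟨⟨i, hlt, hnm⟩, fun ⟨_, h2⟩ => hnm (h2 i hlt)⟩
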